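/- Data-value transfer in complete graphs (statement 1 of the key lemma): let K be a data-graph in which L(v,w) = E for a fixed set E ⊆ Σ_e and all pairs of nodes v, w. Let α be a positive Reg-GXPath path expression and Σ_n^α the set of data values mentioned in α. If (v,w) ∈ ⟦α⟧_K with v ≠ w and D(w) ∉ Σ_n^α, then for every node z with D(z) ∉ Σ_n^α we have (v,z) ∈ ⟦α⟧_K. -/

import Mathlib

/-- A data-graph: a set of nodes, an edge labeling, and a data-value assignment. -/
structure DataGraph (V E Dv : Type) where
  nodes : Set V
  edges : V → V → Set E
  data : V → Dv

mutual
/-- Reg-GXPath path expressions. -/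
inductive PExp (E Dv : Type) where
  | eps : PExp E Dv
  | wild : PExp E Dv
  | lab : E → PExp E Dv
  | inv : E → PExp E Dv
  | test : NExp E Dv → PExp E Dv
  | comp : PExp E Dv → PExp E Dv → PExp E Dv
  | union : PExp E Dv → PExp E Dv → PExp E Dv
  | inter : PExp E Dv → PExp E Dv → PExp E Dv
  | star : PExp E Dv → PExp E Dv
  | compl : PExp E Dv → PExp E Dv
  | iter : PExp E Dv → ℕ → ℕ → PExp E Dv
/-- Reg-GXPath node expressions. -/
inductive NExp (E Dv : Type) where
  | neg : NExp E Dv → NExp E Dv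
  | and : NExp E Dv → NExp E Dv → NExp E Dv
  | or : NExp E Dv → NExp E Dv → NExp E Dv
  | diam : PExp E Dv → NExp E Dv
  | eqc : Dv → NExp E Dv
  | neqc : Dv → NExp E Dv
  | cmpEq : PExp E Dv → PExp E Dv → NExp E Dv
  | cmpNeq : PExp E Dv → PExp E Dv → NExp E Dv
end

variable {V E Dv : Type}

/-- Relational composition of binary relations presented as sets of pairs. -/
def dgComp (R S : Set (V × V)) : Set (V × V) := {p | ∃ y, (p.1, y) ∈ R ∧ (y, p.2) ∈ S}

/-- The identity relation on the nodes of a data-graph. -/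
def DataGraph.idRel (G : DataGraph V E Dv) : Set (V × V) := {p | p.1 = p.2 ∧ p.1 ∈ G.nodes}

/-- Iterated relational composition, with `I` as the 0-th power (identity). -/
def dgPow (I R : Set (V × V)) : ℕ → Set (V × V)
  | 0 => I
  | k + 1 => dgComp (dgPow I R k) R

mutual
/-- Semantics of path expressions on a data-graph: a set of pairs of nodes. -/
def psem (G : DataGraph V E Dv) : PExp E Dv → Set (V × V)
  | .eps => G.idRel
  | .wild => {p | p.1 ∈ G.nodes ∧ p.2 ∈ G.nodes ∧ (G.edges p.1 p.2).Nonempty}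
  | .lab a => {p | p.1 ∈ G.nodes ∧ p.2 ∈ G.nodes ∧ a ∈ G.edges p.1 p.2}
  | .inv a => {p | p.1 ∈ G.nodes ∧ p.2 ∈ G.nodes ∧ a ∈ G.edges p.2 p.1}
  | .test φ => {p | p.1 = p.2 ∧ p.1 ∈ nsem G φ}
  | .comp α β => dgComp (psem G α) (psem G β)
  | .union α β => psem G α ∪ psem G β
  | .inter α β => psem G α ∩ psem G β
  | .star α => G.idRel ∪ {p | Relation.TransGen (fun x y => (x, y) ∈ psem G α) p.1 p.2}
  | .compl α => {p | p.1 ∈ G.nodes ∧ p.2 ∈ G.nodes ∧ p ∉ psem G α}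
  | .iter α n m => {p | ∃ k, n ≤ k ∧ k ≤ m ∧ p ∈ dgPow G.idRel (psem G α) k}
/-- Semantics of node expressions on a data-graph: a set of nodes. -/
def nsem (G : DataGraph V E Dv) : NExp E Dv → Set V
  | .neg φ => {v | v ∈ G.nodes ∧ v ∉ nsem G φ}
  | .and φ ψ => nsem G φ ∩ nsem G ψ
  | .or φ ψ => nsem G φ ∪ nsem G ψ
  | .diam α => {v | ∃ w, (v, w) ∈ psem G α}
  | .eqc c => {v | v ∈ G.nodes ∧ G.data v = c}
  | .neqc c => {v | v ∈ G.nodes ∧ G.data v ≠ c}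
  | .cmpEq α β => {v | ∃ v' v'', (v, v') ∈ psem G α ∧ (v, v'') ∈ psem G β ∧ G.data v' = G.data v''}
  | .cmpNeq α β => {v | ∃ v' v'', (v, v') ∈ psem G α ∧ (v, v'') ∈ psem G β ∧ G.data v' ≠ G.data v''}
end

mutual
/-- Positive (complement/negation-free) path expressions. -/
def PExp.Positive : PExp E Dv → Prop
  | .eps => True
  | .wild => True
  | .lab _ => True
  | .inv _ => True
  | .test φ => φ.Positive
  | .comp α β => α.Positive ∧ β.Positive
  | .union α β => α.Positive ∧ β.Positive
  | .inter α β => α.Positive ∧ β.Positive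
  | .star α => α.Positive
  | .compl _ => False
  | .iter α _ _ => α.Positive
/-- Positive (negation-free) node expressions. -/
def NExp.Positive : NExp E Dv → Prop
  | .neg _ => False
  | .and φ ψ => φ.Positive ∧ ψ.Positive
  | .or φ ψ => φ.Positive ∧ ψ.Positive
  | .diam α => α.Positive
  | .eqc _ => True
  | .neqc _ => True
  | .cmpEq α β => α.Positive ∧ β.Positive
  | .cmpNeq α β => α.Positive ∧ β.Positive
end

/-- `G.Subgraph G'` : `G` is a sub-data-graph of `G'`. -/
def DataGraph.Subgraph (G G' : DataGraph V E Dv) : Prop :=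
  G.nodes ⊆ G'.nodes ∧ (∀ v ∈ G.nodes, ∀ w ∈ G.nodes, G.edges v w ⊆ G'.edges v w) ∧
    ∀ v ∈ G.nodes, G.data v = G'.data v

/-- Consistency of a data-graph w.r.t. sets of path and node constraints. -/
def DataGraph.Consistent (G : DataGraph V E Dv)
    (Rp : Set (PExp E Dv)) (Rn : Set (NExp E Dv)) : Prop :=
  (∀ α ∈ Rp, ∀ v ∈ G.nodes, ∀ w ∈ G.nodes, (v, w) ∈ psem G α) ∧
    (∀ φ ∈ Rn, ∀ v ∈ G.nodes, v ∈ nsem G φ)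

/-- `H` is a subset repair of `G` w.r.t. constraints `Rp ∪ Rn`. -/
def IsSubsetRepair (H G : DataGraph V E Dv)
    (Rp : Set (PExp E Dv)) (Rn : Set (NExp E Dv)) : Prop :=
  H.Consistent Rp Rn ∧ H.Subgraph G ∧
    ∀ K : DataGraph V E Dv, K.Consistent Rp Rn → K.Subgraph G → H.Subgraph K → K.Subgraph H

/-- `H` is a superset repair of `G` w.r.t. constraints `Rp ∪ Rn`. -/
def IsSupersetRepair (H G : DataGraph V E Dv)
    (Rp : Set (PExp E Dv)) (Rn : Set (NExp E Dv)) : Prop :=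
  H.Consistent Rp Rn ∧ G.Subgraph H ∧
    ∀ K : DataGraph V E Dv, K.Consistent Rp Rn → G.Subgraph K → K.Subgraph H → H.Subgraph K
mutual
/-- Data values mentioned in a path expression. -/
def PExp.vals {E Dv : Type} : PExp E Dv → Set Dv
  | .eps => ∅
  | .wild => ∅
  | .lab _ => ∅
  | .inv _ => ∅
  | .test φ => φ.vals
  | .comp α β => α.vals ∪ β.vals
  | .union α β => α.vals ∪ β.vals
  | .inter α β => α.vals ∪ β.vals
  | .star α => α.vals
  | .compl α => α.vals
  | .iter α _ _ => α.vals
/-- Data values mentioned in a node expression. -/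
def NExp.vals {E Dv : Type} : NExp E Dv → Set Dv
  | .neg φ => φ.vals
  | .and φ ψ => φ.vals ∪ ψ.vals
  | .or φ ψ => φ.vals ∪ ψ.vals
  | .diam α => α.vals
  | .eqc c => {c}
  | .neqc c => {c}
  | .cmpEq α β => α.vals ∪ β.vals
  | .cmpNeq α β => α.vals ∪ β.vals
end

section Stmt8Aux

variable {V E Dv : Type}

/-- Split off the last step of a `TransGen` path, skipping trailing loops at `w`. -/
lemma tgLast {X : Type*} {r : X → X → Prop} {v w : X} (h : Relation.TransGen r v w) :
    v ≠ w → ∃ y, y ≠ w ∧ (y = v ∨ Relation.TransGen r v y) ∧ r y w := by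
  induction h with
  | single h => exact fun hne => ⟨v, hne, Or.inl rfl, h⟩
  | @tail b c h1 h2 ih =>
    intro hne
    by_cases hb : b = c
    · subst hb; exact ih hne
    · exact ⟨b, hb, Or.inr h1, h2⟩

/-- Split off the first step of a `TransGen` path, skipping leading loops at `v`. -/
lemma tgHead {X : Type*} {r : X → X → Prop} {v w : X} (h : Relation.TransGen r v w) :
    v ≠ w → ∃ x, x ≠ v ∧ r v x ∧ (x = w ∨ Relation.TransGen r x w) := by
  induction h using Relation.TransGen.head_induction_on with
  | single h => exact fun hne => ⟨w, Ne.symm hne, h, Or.inl rfl⟩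
  | @head a c h' hT ih =>
    intro hne
    by_cases hca : c = a
    · subst hca; exact ih hne
    · exact ⟨c, hca, h', Or.inr hT⟩

/-- Forward data-transfer property of a relation. -/
def FwP (K : DataGraph V E Dv) (R : Set (V × V)) (S : Set Dv) : Prop :=
  ∀ ⦃v w : V⦄, (v, w) ∈ R → v ≠ w → K.data w ∉ S →
    ∀ z ∈ K.nodes, K.data z ∉ S → (v, z) ∈ R

/-- Backward data-transfer property of a relation. -/
def BwP (K : DataGraph V E Dv) (R : Set (V × V)) (S : Set Dv) : Prop :=
  ∀ ⦃v w : V⦄, (v, w) ∈ R → v ≠ w → K.data v ∉ S →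
    ∀ z ∈ K.nodes, K.data z ∉ S → (z, w) ∈ R

/-- Diagonal data-transfer property of a relation. -/
def DgP (K : DataGraph V E Dv) (R : Set (V × V)) (S : Set Dv) : Prop :=
  ∀ ⦃v : V⦄, (v, v) ∈ R → K.data v ∉ S →
    ∀ z ∈ K.nodes, K.data z ∉ S → (z, z) ∈ R

/-- Reversal property of a relation (for data-free endpoints). -/
def RvP (K : DataGraph V E Dv) (R : Set (V × V)) (S : Set Dv) : Prop :=
  ∀ ⦃v w : V⦄, (v, w) ∈ R → K.data v ∉ S → K.data w ∉ S → (w, v) ∈ R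

lemma FwP.anti {K : DataGraph V E Dv} {R : Set (V × V)} {S S' : Set Dv}
    (h : FwP K R S) (hs : S ⊆ S') : FwP K R S' :=
  fun _ _ hvw hne hw z hz hzd => h hvw hne (fun c => hw (hs c)) z hz (fun c => hzd (hs c))

lemma BwP.anti {K : DataGraph V E Dv} {R : Set (V × V)} {S S' : Set Dv}
    (h : BwP K R S) (hs : S ⊆ S') : BwP K R S' :=
  fun _ _ hvw hne hv z hz hzd => h hvw hne (fun c => hv (hs c)) z hz (fun c => hzd (hs c))

lemma DgP.anti {K : DataGraph V E Dv} {R : Set (V × V)} {S S' : Set Dv}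
    (h : DgP K R S) (hs : S ⊆ S') : DgP K R S' :=
  fun _ hvv hv z hz hzd => h hvv (fun c => hv (hs c)) z hz (fun c => hzd (hs c))

lemma RvP.anti {K : DataGraph V E Dv} {R : Set (V × V)} {S S' : Set Dv}
    (h : RvP K R S) (hs : S ⊆ S') : RvP K R S' :=
  fun _ _ hvw hv hw => h hvw (fun c => hv (hs c)) (fun c => hw (hs c))

lemma dgPow_mem {K : DataGraph V E Dv} {R : Set (V × V)}
    (hsub : ∀ p ∈ R, p.1 ∈ K.nodes ∧ p.2 ∈ K.nodes) :
    ∀ k, ∀ p ∈ dgPow K.idRel R k, p.1 ∈ K.nodes ∧ p.2 ∈ K.nodes := by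
  intro k
  induction k with
  | zero => exact fun p hp => ⟨hp.2, hp.1 ▸ hp.2⟩
  | succ k ih =>
    rintro p ⟨y, h1, h2⟩
    exact ⟨(ih _ h1).1, (hsub _ h2).2⟩

lemma pow_props (K : DataGraph V E Dv) (R : Set (V × V)) (S : Set Dv)
    (hsub : ∀ p ∈ R, p.1 ∈ K.nodes ∧ p.2 ∈ K.nodes)
    (hF : FwP K R S) (hB : BwP K R S) (hD : DgP K R S) (hR : RvP K R S) :
    ∀ k, FwP K (dgPow K.idRel R k) S ∧ BwP K (dgPow K.idRel R k) S ∧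
      DgP K (dgPow K.idRel R k) S ∧ RvP K (dgPow K.idRel R k) S := by
  intro k
  induction k with
  | zero =>
    refine ⟨?_, ?_, ?_, ?_⟩
    · exact fun v w hvw hne _ _ _ _ => absurd hvw.1 hne
    · exact fun v w hvw hne _ _ _ _ => absurd hvw.1 hne
    · exact fun v _ _ z hz _ => ⟨rfl, hz⟩
    · exact fun v w hvw _ _ => ⟨hvw.1.symm, (show v = w from hvw.1) ▸ hvw.2⟩
  | succ k ih =>
    obtain ⟨iF, iB, iD, iR⟩ := ih
    refine ⟨?_, ?_, ?_, ?_⟩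
    · rintro v w ⟨y, h1, h2⟩ hne hwd z hz hzd
      have h1 : (v, y) ∈ dgPow K.idRel R k := h1
      have h2 : (y, w) ∈ R := h2
      by_cases hyw : y = w
      · subst hyw
        exact ⟨z, iF h1 hne hwd z hz hzd, hD h2 hwd z hz hzd⟩
      · exact ⟨y, h1, hF h2 hyw hwd z hz hzd⟩
    · rintro v w ⟨y, h1, h2⟩ hne hvd z hz hzd
      have h1 : (v, y) ∈ dgPow K.idRel R k := h1
      have h2 : (y, w) ∈ R := h2
      by_cases hyv : y = v
      · subst hyv
        exact ⟨z, iD h1 hvd z hz hzd, hB h2 hne hvd z hz hzd⟩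
      · exact ⟨y, iB h1 (fun e => hyv e.symm) hvd z hz hzd, h2⟩
    · rintro v ⟨y, h1, h2⟩ hvd z hz hzd
      have h1 : (v, y) ∈ dgPow K.idRel R k := h1
      have h2 : (y, v) ∈ R := h2
      by_cases hyv : y = v
      · subst hyv
        exact ⟨z, iD h1 hvd z hz hzd, hD h2 hvd z hz hzd⟩
      · exact ⟨y, iB h1 (fun e => hyv e.symm) hvd z hz hzd, hF h2 hyv hvd z hz hzd⟩
    · intro v w hvw hvd hwd
      by_cases hvw' : v = w
      · subst hvw'; exact hvw
      obtain ⟨y, h1, h2⟩ := hvw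
      have h1 : (v, y) ∈ dgPow K.idRel R k := h1
      have h2 : (y, w) ∈ R := h2
      have hvn : v ∈ K.nodes := (dgPow_mem hsub k _ h1).1
      have hwn : w ∈ K.nodes := (hsub _ h2).2
      by_cases hyv : y = v
      · subst hyv
        exact ⟨w, iD h1 hvd w hwn hwd, hR h2 hvd hwd⟩
      · by_cases hyw : y = w
        · subst hyw
          exact ⟨v, iR h1 hvd hwd, hD h2 hwd v hvn hvd⟩
        · exact ⟨y, iB h1 (fun e => hyv e.symm) hvd w hwn hwd, hF h2 hyw hwd v hvn hvd⟩

end Stmt8Aux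

section Stmt8Mem

variable {V E Dv : Type}

mutual

theorem pmem {K : DataGraph V E Dv} : ∀ (α : PExp E Dv) ⦃p : V × V⦄,
    p ∈ psem K α → p.1 ∈ K.nodes ∧ p.2 ∈ K.nodes
  | .eps, p, h => ⟨h.2, h.1 ▸ h.2⟩
  | .wild, _, h => ⟨h.1, h.2.1⟩
  | .lab _, _, h => ⟨h.1, h.2.1⟩
  | .inv _, _, h => ⟨h.1, h.2.1⟩
  | .test φ, _, h => ⟨nmem φ h.2, h.1 ▸ nmem φ h.2⟩
  | .comp α β, p, h => by
      obtain ⟨y, h1, h2⟩ := h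
      exact ⟨(pmem α h1).1, (pmem β h2).2⟩
  | .union α β, p, h => h.elim (fun h => pmem α h) (fun h => pmem β h)
  | .inter α _, _, h => pmem α h.1
  | .star α, p, h => by
      cases h with
      | inl h => exact ⟨h.2, h.1 ▸ h.2⟩
      | inr h =>
        obtain ⟨b, hb, -⟩ := Relation.TransGen.head'_iff.mp h
        obtain ⟨c, -, hc⟩ := Relation.TransGen.tail'_iff.mp h
        exact ⟨(pmem α hb).1, (pmem α hc).2⟩
  | .compl _, _, h => ⟨h.1, h.2.1⟩
  | .iter α _ _, p, h => by
      obtain ⟨k, -, -, hk⟩ := h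
      exact dgPow_mem (fun q hq => pmem α hq) k p hk

theorem nmem {K : DataGraph V E Dv} : ∀ (φ : NExp E Dv) ⦃v : V⦄,
    v ∈ nsem K φ → v ∈ K.nodes
  | .neg _, _, h => h.1
  | .and φ _, _, h => nmem φ h.1
  | .or φ ψ, _, h => h.elim (fun h => nmem φ h) (fun h => nmem ψ h)
  | .diam α, _, h => by
      obtain ⟨w, hw⟩ := h
      exact (pmem α hw).1
  | .eqc _, _, h => h.1
  | .neqc _, _, h => h.1
  | .cmpEq α _, _, h => by
      obtain ⟨a, b, h1, -, -⟩ := h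
      exact (pmem α h1).1
  | .cmpNeq α _, _, h => by
      obtain ⟨a, b, h1, -, -⟩ := h
      exact (pmem α h1).1

end

end Stmt8Mem

section Stmt8Main

variable {V E Dv : Type}

mutual

theorem main_p (K : DataGraph V E Dv) (Eset : Set E)
    (hK : ∀ v ∈ K.nodes, ∀ w ∈ K.nodes, K.edges v w = Eset) :
    ∀ (α : PExp E Dv), α.Positive →
      FwP K (psem K α) α.vals ∧ BwP K (psem K α) α.vals ∧
        DgP K (psem K α) α.vals ∧ RvP K (psem K α) α.vals
  | .eps, _ => by
    simp only [psem, PExp.vals]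
    refine ⟨?_, ?_, ?_, ?_⟩
    · exact fun v w h hne _ _ _ _ => absurd h.1 hne
    · exact fun v w h hne _ _ _ _ => absurd h.1 hne
    · exact fun v _ _ z hz _ => ⟨rfl, hz⟩
    · exact fun v w h _ _ => ⟨h.1.symm, (show v = w from h.1) ▸ h.2⟩
  | .wild, _ => by
    simp only [psem, PExp.vals]
    refine ⟨?_, ?_, ?_, ?_⟩
    · exact fun v w h _ _ z hz _ =>
        ⟨h.1, hz, by rw [hK v h.1 z hz, ← hK v h.1 w h.2.1]; exact h.2.2⟩
    · exact fun v w h _ _ z hz _ =>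
        ⟨hz, h.2.1, by rw [hK z hz w h.2.1, ← hK v h.1 w h.2.1]; exact h.2.2⟩
    · exact fun v h _ z hz _ =>
        ⟨hz, hz, by rw [hK z hz z hz, ← hK v h.1 v h.1]; exact h.2.2⟩
    · exact fun v w h _ _ =>
        ⟨h.2.1, h.1, by rw [hK w h.2.1 v h.1, ← hK v h.1 w h.2.1]; exact h.2.2⟩
  | .lab a, _ => by
    simp only [psem, PExp.vals]
    refine ⟨?_, ?_, ?_, ?_⟩
    · exact fun v w h _ _ z hz _ =>
        ⟨h.1, hz, by rw [hK v h.1 z hz, ← hK v h.1 w h.2.1]; exact h.2.2⟩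
    · exact fun v w h _ _ z hz _ =>
        ⟨hz, h.2.1, by rw [hK z hz w h.2.1, ← hK v h.1 w h.2.1]; exact h.2.2⟩
    · exact fun v h _ z hz _ =>
        ⟨hz, hz, by rw [hK z hz z hz, ← hK v h.1 v h.1]; exact h.2.2⟩
    · exact fun v w h _ _ =>
        ⟨h.2.1, h.1, by rw [hK w h.2.1 v h.1, ← hK v h.1 w h.2.1]; exact h.2.2⟩
  | .inv a, _ => by
    simp only [psem, PExp.vals]
    refine ⟨?_, ?_, ?_, ?_⟩
    · exact fun v w h _ _ z hz _ =>
        ⟨h.1, hz, by rw [hK z hz v h.1, ← hK w h.2.1 v h.1]; exact h.2.2⟩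
    · exact fun v w h _ _ z hz _ =>
        ⟨hz, h.2.1, by rw [hK w h.2.1 z hz, ← hK w h.2.1 v h.1]; exact h.2.2⟩
    · exact fun v h _ z hz _ =>
        ⟨hz, hz, by rw [hK z hz z hz, ← hK v h.1 v h.1]; exact h.2.2⟩
    · exact fun v w h _ _ =>
        ⟨h.2.1, h.1, by rw [hK v h.1 w h.2.1, ← hK w h.2.1 v h.1]; exact h.2.2⟩
  | .test φ, hα => by
    simp only [PExp.Positive] at hα
    have hn := main_n K Eset hK φ hα
    simp only [psem, PExp.vals]
    refine ⟨?_, ?_, ?_, ?_⟩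
    · exact fun v w h hne _ _ _ _ => absurd h.1 hne
    · exact fun v w h hne _ _ _ _ => absurd h.1 hne
    · exact fun v h hvd z hz hzd => ⟨rfl, hn h.2 hvd z hz hzd⟩
    · exact fun v w h _ _ => ⟨h.1.symm, (show v = w from h.1) ▸ h.2⟩
  | .comp α β, hα => by
    simp only [PExp.Positive] at hα
    obtain ⟨aF, aB, aD, aR⟩ := main_p K Eset hK α hα.1
    obtain ⟨bF, bB, bD, bR⟩ := main_p K Eset hK β hα.2
    simp only [psem, PExp.vals]
    have aF := aF.anti (Set.subset_union_left (t := β.vals))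
    have aB := aB.anti (Set.subset_union_left (t := β.vals))
    have aD := aD.anti (Set.subset_union_left (t := β.vals))
    have aR := aR.anti (Set.subset_union_left (t := β.vals))
    have bF := bF.anti (Set.subset_union_right (s := α.vals))
    have bB := bB.anti (Set.subset_union_right (s := α.vals))
    have bD := bD.anti (Set.subset_union_right (s := α.vals))
    have bR := bR.anti (Set.subset_union_right (s := α.vals))
    refine ⟨?_, ?_, ?_, ?_⟩
    · rintro v w ⟨y, h1, h2⟩ hne hwd z hz hzd
      have h1 : (v, y) ∈ psem K α := h1
      have h2 : (y, w) ∈ psem K β := h2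
      by_cases hyw : y = w
      · subst hyw
        exact ⟨z, aF h1 hne hwd z hz hzd, bD h2 hwd z hz hzd⟩
      · exact ⟨y, h1, bF h2 hyw hwd z hz hzd⟩
    · rintro v w ⟨y, h1, h2⟩ hne hvd z hz hzd
      have h1 : (v, y) ∈ psem K α := h1
      have h2 : (y, w) ∈ psem K β := h2
      by_cases hyv : y = v
      · subst hyv
        exact ⟨z, aD h1 hvd z hz hzd, bB h2 hne hvd z hz hzd⟩
      · exact ⟨y, aB h1 (fun e => hyv e.symm) hvd z hz hzd, h2⟩
    · rintro v ⟨y, h1, h2⟩ hvd z hz hzd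
      have h1 : (v, y) ∈ psem K α := h1
      have h2 : (y, v) ∈ psem K β := h2
      by_cases hyv : y = v
      · subst hyv
        exact ⟨z, aD h1 hvd z hz hzd, bD h2 hvd z hz hzd⟩
      · exact ⟨y, aB h1 (fun e => hyv e.symm) hvd z hz hzd, bF h2 hyv hvd z hz hzd⟩
    · intro v w h hvd hwd
      by_cases hvw : v = w
      · subst hvw; exact h
      obtain ⟨y, h1, h2⟩ := h
      have h1 : (v, y) ∈ psem K α := h1
      have h2 : (y, w) ∈ psem K β := h2
      have hvn : v ∈ K.nodes := (pmem α h1).1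
      have hwn : w ∈ K.nodes := (pmem β h2).2
      by_cases hyv : y = v
      · subst hyv
        exact ⟨w, aD h1 hvd w hwn hwd, bR h2 hvd hwd⟩
      · by_cases hyw : y = w
        · subst hyw
          exact ⟨v, aR h1 hvd hwd, bD h2 hwd v hvn hvd⟩
        · exact ⟨y, aB h1 (fun e => hyv e.symm) hvd w hwn hwd,
            bF h2 hyw hwd v hvn hvd⟩
  | .union α β, hα => by
    simp only [PExp.Positive] at hα
    obtain ⟨aF, aB, aD, aR⟩ := main_p K Eset hK α hα.1
    obtain ⟨bF, bB, bD, bR⟩ := main_p K Eset hK β hα.2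
    simp only [psem, PExp.vals]
    have aF := aF.anti (Set.subset_union_left (t := β.vals))
    have aB := aB.anti (Set.subset_union_left (t := β.vals))
    have aD := aD.anti (Set.subset_union_left (t := β.vals))
    have aR := aR.anti (Set.subset_union_left (t := β.vals))
    have bF := bF.anti (Set.subset_union_right (s := α.vals))
    have bB := bB.anti (Set.subset_union_right (s := α.vals))
    have bD := bD.anti (Set.subset_union_right (s := α.vals))
    have bR := bR.anti (Set.subset_union_right (s := α.vals))
    refine ⟨?_, ?_, ?_, ?_⟩
    · rintro v w (h | h) hne hwd z hz hzd
      · exact Or.inl (aF h hne hwd z hz hzd)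
      · exact Or.inr (bF h hne hwd z hz hzd)
    · rintro v w (h | h) hne hvd z hz hzd
      · exact Or.inl (aB h hne hvd z hz hzd)
      · exact Or.inr (bB h hne hvd z hz hzd)
    · rintro v (h | h) hvd z hz hzd
      · exact Or.inl (aD h hvd z hz hzd)
      · exact Or.inr (bD h hvd z hz hzd)
    · rintro v w (h | h) hvd hwd
      · exact Or.inl (aR h hvd hwd)
      · exact Or.inr (bR h hvd hwd)
  | .inter α β, hα => by
    simp only [PExp.Positive] at hα
    obtain ⟨aF, aB, aD, aR⟩ := main_p K Eset hK α hα.1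
    obtain ⟨bF, bB, bD, bR⟩ := main_p K Eset hK β hα.2
    simp only [psem, PExp.vals]
    have aF := aF.anti (Set.subset_union_left (t := β.vals))
    have aB := aB.anti (Set.subset_union_left (t := β.vals))
    have aD := aD.anti (Set.subset_union_left (t := β.vals))
    have aR := aR.anti (Set.subset_union_left (t := β.vals))
    have bF := bF.anti (Set.subset_union_right (s := α.vals))
    have bB := bB.anti (Set.subset_union_right (s := α.vals))
    have bD := bD.anti (Set.subset_union_right (s := α.vals))
    have bR := bR.anti (Set.subset_union_right (s := α.vals))
    refine ⟨?_, ?_, ?_, ?_⟩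
    · exact fun v w h hne hwd z hz hzd =>
        ⟨aF h.1 hne hwd z hz hzd, bF h.2 hne hwd z hz hzd⟩
    · exact fun v w h hne hvd z hz hzd =>
        ⟨aB h.1 hne hvd z hz hzd, bB h.2 hne hvd z hz hzd⟩
    · exact fun v h hvd z hz hzd =>
        ⟨aD h.1 hvd z hz hzd, bD h.2 hvd z hz hzd⟩
    · exact fun v w h hvd hwd => ⟨aR h.1 hvd hwd, bR h.2 hvd hwd⟩
  | .star α, hα => by
    simp only [PExp.Positive] at hα
    obtain ⟨aF, aB, aD, aR⟩ := main_p K Eset hK α hα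
    simp only [psem, PExp.vals]
    refine ⟨?_, ?_, ?_, ?_⟩
    · rintro v w (h | h) hne hwd z hz hzd
      · exact absurd h.1 hne
      · by_cases hzv : z = v
        · subst hzv
          obtain ⟨b, hb, -⟩ := Relation.TransGen.head'_iff.mp h
          exact Or.inl ⟨rfl, (pmem α hb).1⟩
        · obtain ⟨y, hyw, hy, hlast⟩ := tgLast h hne
          have hyz : (y, z) ∈ psem K α := aF hlast hyw hwd z hz hzd
          refine Or.inr ?_
          rcases hy with rfl | hTG
          · exact Relation.TransGen.single hyz
          · exact hTG.tail hyz
    · rintro v w (h | h) hne hvd z hz hzd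
      · exact absurd h.1 hne
      · by_cases hzw : z = w
        · exact Or.inl ⟨hzw, hz⟩
        · obtain ⟨x, hxv, hfirst, hx⟩ := tgHead h hne
          have hzx : (z, x) ∈ psem K α := aB hfirst (fun e => hxv e.symm) hvd z hz hzd
          refine Or.inr ?_
          rcases hx with rfl | hTG
          · exact Relation.TransGen.single hzx
          · exact Relation.TransGen.head hzx hTG
    · exact fun v _ _ z hz _ => Or.inl ⟨rfl, hz⟩
    · rintro v w (h | h) hvd hwd
      · exact Or.inl ⟨h.1.symm, (show v = w from h.1) ▸ h.2⟩
      · by_cases hvw : v = w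
        · subst hvw; exact Or.inr h
        obtain ⟨b, hb, -⟩ := Relation.TransGen.head'_iff.mp h
        have hvn : v ∈ K.nodes := (pmem α hb).1
        obtain ⟨y, hyw, hy, hlast⟩ := tgLast h hvw
        have hwn : w ∈ K.nodes := (pmem α hlast).2
        have hyv : (y, v) ∈ psem K α := aF hlast hyw hwd v hvn hvd
        refine Or.inr ?_
        by_cases hyveq : y = v
        · subst hyveq
          exact Relation.TransGen.single (aR hlast hvd hwd)
        · have hTG : Relation.TransGen (fun x y => (x, y) ∈ psem K α) v y := by
            rcases hy with rfl | hTG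
            · exact absurd rfl hyveq
            · exact hTG
          obtain ⟨x, hxv, hfirst, hx⟩ := tgHead hTG (fun e => hyveq e.symm)
          have hwx : (w, x) ∈ psem K α := aB hfirst (fun e => hxv e.symm) hvd w hwn hwd
          have tx : Relation.TransGen (fun x y => (x, y) ∈ psem K α) x v := by
            rcases hx with rfl | hTG2
            · exact Relation.TransGen.single hyv
            · exact hTG2.tail hyv
          exact Relation.TransGen.head hwx tx
  | .compl α, hα => by
    simp only [PExp.Positive] at hα
  | .iter α n m, hα => by
    simp only [PExp.Positive] at hα
    obtain ⟨aF, aB, aD, aR⟩ := main_p K Eset hK α hα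
    have hp := pow_props K (psem K α) α.vals (fun q hq => pmem α hq) aF aB aD aR
    simp only [psem, PExp.vals]
    refine ⟨?_, ?_, ?_, ?_⟩
    · rintro v w ⟨k, h1, h2, h3⟩ hne hwd z hz hzd
      exact ⟨k, h1, h2, (hp k).1 h3 hne hwd z hz hzd⟩
    · rintro v w ⟨k, h1, h2, h3⟩ hne hvd z hz hzd
      exact ⟨k, h1, h2, (hp k).2.1 h3 hne hvd z hz hzd⟩
    · rintro v ⟨k, h1, h2, h3⟩ hvd z hz hzd
      exact ⟨k, h1, h2, (hp k).2.2.1 h3 hvd z hz hzd⟩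
    · rintro v w ⟨k, h1, h2, h3⟩ hvd hwd
      exact ⟨k, h1, h2, (hp k).2.2.2 h3 hvd hwd⟩

theorem main_n (K : DataGraph V E Dv) (Eset : Set E)
    (hK : ∀ v ∈ K.nodes, ∀ w ∈ K.nodes, K.edges v w = Eset) :
    ∀ (φ : NExp E Dv), φ.Positive →
      ∀ ⦃v : V⦄, v ∈ nsem K φ → K.data v ∉ φ.vals →
        ∀ z ∈ K.nodes, K.data z ∉ φ.vals → z ∈ nsem K φ
  | .neg φ, hφ => by
    simp only [NExp.Positive] at hφ
  | .and φ ψ, hφ => by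
    simp only [NExp.Positive] at hφ
    have ha := main_n K Eset hK φ hφ.1
    have hb := main_n K Eset hK ψ hφ.2
    simp only [nsem, NExp.vals]
    intro v h hvd z hz hzd
    exact ⟨ha h.1 (fun c => hvd (Or.inl c)) z hz (fun c => hzd (Or.inl c)),
      hb h.2 (fun c => hvd (Or.inr c)) z hz (fun c => hzd (Or.inr c))⟩
  | .or φ ψ, hφ => by
    simp only [NExp.Positive] at hφ
    have ha := main_n K Eset hK φ hφ.1
    have hb := main_n K Eset hK ψ hφ.2
    simp only [nsem, NExp.vals]
    rintro v (h | h) hvd z hz hzd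
    · exact Or.inl (ha h (fun c => hvd (Or.inl c)) z hz (fun c => hzd (Or.inl c)))
    · exact Or.inr (hb h (fun c => hvd (Or.inr c)) z hz (fun c => hzd (Or.inr c)))
  | .diam α, hφ => by
    simp only [NExp.Positive] at hφ
    obtain ⟨aF, aB, aD, aR⟩ := main_p K Eset hK α hφ
    simp only [nsem, NExp.vals]
    rintro v ⟨w, hw⟩ hvd z hz hzd
    have hw : (v, w) ∈ psem K α := hw
    by_cases hvw : v = w
    · subst hvw
      exact ⟨z, aD hw hvd z hz hzd⟩
    · exact ⟨w, aB hw hvw hvd z hz hzd⟩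
  | .eqc c, _ => by
    simp only [nsem, NExp.vals]
    intro v h hvd
    exact absurd h.2 hvd
  | .neqc c, _ => by
    simp only [nsem, NExp.vals]
    intro v _ _ z hz hzd
    exact ⟨hz, hzd⟩
  | .cmpEq α β, hφ => by
    simp only [NExp.Positive] at hφ
    obtain ⟨aF, aB, aD, aR⟩ := main_p K Eset hK α hφ.1
    obtain ⟨bF, bB, bD, bR⟩ := main_p K Eset hK β hφ.2
    simp only [nsem, NExp.vals]
    have aF := aF.anti (Set.subset_union_left (t := β.vals))
    have aB := aB.anti (Set.subset_union_left (t := β.vals))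
    have aD := aD.anti (Set.subset_union_left (t := β.vals))
    have aR := aR.anti (Set.subset_union_left (t := β.vals))
    have bF := bF.anti (Set.subset_union_right (s := α.vals))
    have bB := bB.anti (Set.subset_union_right (s := α.vals))
    have bD := bD.anti (Set.subset_union_right (s := α.vals))
    have bR := bR.anti (Set.subset_union_right (s := α.vals))
    rintro v ⟨a, b, h1, h2, heq⟩ hvd z hz hzd
    have h1 : (v, a) ∈ psem K α := h1
    have h2 : (v, b) ∈ psem K β := h2
    have heq : K.data a = K.data b := heq
    by_cases hzv : z = v
    · subst hzv; exact ⟨a, b, h1, h2, heq⟩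
    by_cases hav : v = a
    · subst hav
      by_cases hbv : v = b
      · subst hbv
        exact ⟨z, z, aD h1 hvd z hz hzd, bD h2 hvd z hz hzd, rfl⟩
      · have hbd : K.data b ∉ α.vals ∪ β.vals := by rw [← heq]; exact hvd
        have h3 : (v, z) ∈ psem K β := bF h2 hbv hbd z hz hzd
        have h4 : (z, z) ∈ psem K β := bB h3 (fun e => hzv e.symm) hvd z hz hzd
        exact ⟨z, z, aD h1 hvd z hz hzd, h4, rfl⟩
    · by_cases hbv : v = b
      · subst hbv
        have had : K.data a ∉ α.vals ∪ β.vals := by rw [heq]; exact hvd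
        have h3 : (v, z) ∈ psem K α := aF h1 hav had z hz hzd
        have h4 : (z, z) ∈ psem K α := aB h3 (fun e => hzv e.symm) hvd z hz hzd
        exact ⟨z, z, h4, bD h2 hvd z hz hzd, rfl⟩
      · exact ⟨a, b, aB h1 hav hvd z hz hzd, bB h2 hbv hvd z hz hzd, heq⟩
  | .cmpNeq α β, hφ => by
    simp only [NExp.Positive] at hφ
    obtain ⟨aF, aB, aD, aR⟩ := main_p K Eset hK α hφ.1
    obtain ⟨bF, bB, bD, bR⟩ := main_p K Eset hK β hφ.2
    simp only [nsem, NExp.vals]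
    have aF := aF.anti (Set.subset_union_left (t := β.vals))
    have aB := aB.anti (Set.subset_union_left (t := β.vals))
    have aD := aD.anti (Set.subset_union_left (t := β.vals))
    have aR := aR.anti (Set.subset_union_left (t := β.vals))
    have bF := bF.anti (Set.subset_union_right (s := α.vals))
    have bB := bB.anti (Set.subset_union_right (s := α.vals))
    have bD := bD.anti (Set.subset_union_right (s := α.vals))
    have bR := bR.anti (Set.subset_union_right (s := α.vals))
    rintro v ⟨a, b, h1, h2, hne⟩ hvd z hz hzd
    have h1 : (v, a) ∈ psem K α := h1
    have h2 : (v, b) ∈ psem K β := h2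
    have hne : K.data a ≠ K.data b := hne
    by_cases hzv : z = v
    · subst hzv; exact ⟨a, b, h1, h2, hne⟩
    by_cases hav : v = a
    · subst hav
      by_cases hbv : v = b
      · subst hbv; exact absurd rfl hne
      · have hza : (z, z) ∈ psem K α := aD h1 hvd z hz hzd
        by_cases hdb : K.data z = K.data b
        · have hbd : K.data b ∉ α.vals ∪ β.vals := by rw [← hdb]; exact hzd
          have hrev : (b, v) ∈ psem K β := bR h2 hvd hbd
          have hzvβ : (z, v) ∈ psem K β := by
            by_cases hzb : z = b
            · subst hzb; exact hrev
            · exact bB hrev (fun e => hbv e.symm) hbd z hz hzd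
          exact ⟨z, v, hza, hzvβ, fun e => hne (e.symm.trans hdb)⟩
        · exact ⟨z, b, hza, bB h2 hbv hvd z hz hzd, hdb⟩
    · by_cases hbv : v = b
      · subst hbv
        have hzb : (z, z) ∈ psem K β := bD h2 hvd z hz hzd
        by_cases hda : K.data z = K.data a
        · have had : K.data a ∉ α.vals ∪ β.vals := by rw [← hda]; exact hzd
          have hrev : (a, v) ∈ psem K α := aR h1 hvd had
          have hzvα : (z, v) ∈ psem K α := by
            by_cases hza : z = a
            · subst hza; exact hrev
            · exact aB hrev (fun e => hav e.symm) had z hz hzd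
          exact ⟨v, z, hzvα, hzb, fun e => hne (hda.symm.trans e.symm)⟩
        · exact ⟨a, z, aB h1 hav hvd z hz hzd, hzb, fun e => hda e.symm⟩
      · exact ⟨a, b, aB h1 hav hvd z hz hzd, bB h2 hbv hvd z hz hzd, hne⟩

end

end Stmt8Main

/-- data-value transfer in uniformly complete graphs (path expressions,
forward statement). -/
theorem stmt8 {V E Dv : Type} (K : DataGraph V E Dv) (Eset : Set E)
    (hK : ∀ v ∈ K.nodes, ∀ w ∈ K.nodes, K.edges v w = Eset)
    (α : PExp E Dv) (hα : α.Positive)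
    (v w : V) (hv : v ∈ K.nodes) (hw : w ∈ K.nodes)
    (hvw : (v, w) ∈ psem K α) (hne : v ≠ w) (hwd : K.data w ∉ α.vals) :
    ∀ z ∈ K.nodes, K.data z ∉ α.vals → (v, z) ∈ psem K α := by
  exact fun z hz hzd => (main_p K Eset hK α hα).1 hvw hne hwd z hz hzd
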